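/- Let C : [0,T] ⇉ ℝ^e be compact convex valued and Hausdorff-continuous, and suppose B(x,r) ⊆ C(t) for all t, for some x ∈ ℝ^e and r > 0. For n ∈ ℕ*, let t_k^n = kT/n and define the catching-up scheme Y_0^n := a ∈ C(0), Y_{k+1}^n := p_{C(t_{k+1}^n)}(Y_k^n). Then the total variation of the discrete sequence satisfies ∑_{k=0}^{n-1} ‖Y_{k+1}^n - Y_k^n‖ ≤ l(r, ‖a - x‖), where l(s,S) = max{0, (S² - s²)/(2s)} if e > 1 and l(s,S) = max{0, S - s} if e = 1. -/

import Mathlib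

open scoped BigOperators

noncomputable section

open Classical in

/-- The metric projection onto a set `C` (via choice; `x` itself if no closest
point exists). -/
def metricProj {e : ℕ} (C : Set (EuclideanSpace ℝ (Fin e)))
    (x : EuclideanSpace ℝ (Fin e)) : EuclideanSpace ℝ (Fin e) :=
  if h : ∃ y ∈ C, ∀ z ∈ C, dist x y ≤ dist x z then h.choose else x

/-- Valadier's bound `l(s,S)`. -/
def valadierBound (e : ℕ) (s S : ℝ) : ℝ :=
  if 1 < e then max 0 ((S ^ 2 - s ^ 2) / (2 * s)) else max 0 (S - s)

/-!
If `p` is the projection of `y ∉ C` onto a convex set `C ⊇ B(x, r)`, then testing the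
variational inequality at the point `x + r (y - p) / ‖y - p‖` of `B(x, r)` gives
`r ‖y - p‖ ≤ ⟪y - p, p - x⟫`. Expanding `‖y - x‖² = ‖(y - p) + (p - x)‖²` shows that each
projection step of length `d` lowers the potential `max (‖· - x‖², r²)` by at least `2 r d`;
in dimension one `y - p` and `p - x` point the same way, so the potential `max (‖· - x‖, r)`
drops by at least `d`. The variation then telescopes.
-/

open scoped RealInnerProductSpace

def IsNearestPoint {α : Type*} [PseudoMetricSpace α] (C : Set α) (y p : α) : Prop :=
  p ∈ C ∧ ∀ z ∈ C, dist y p ≤ dist y z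

section NearestPoint

variable {E : Type*} [NormedAddCommGroup E] [InnerProductSpace ℝ E]

variable {C : Set E} {x y p : E} {r : ℝ}

theorem IsNearestPoint.inner_sub_nonpos (hconv : Convex ℝ C) (h : IsNearestPoint C y p)
    {z : E} (hz : z ∈ C) : ⟪y - p, z - p⟫ ≤ 0 := by
  have : Nonempty C := ⟨⟨p, h.1⟩⟩
  have hbdd : BddBelow (Set.range fun w : C => ‖y - (w : E)‖) :=
    ⟨0, by rintro _ ⟨w, rfl⟩; positivity⟩
  have hinf : ‖y - p‖ = ⨅ w : C, ‖y - (w : E)‖ :=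
    le_antisymm (le_ciInf fun w => by simpa [dist_eq_norm] using h.2 w w.2)
      (ciInf_le hbdd ⟨p, h.1⟩)
  exact (norm_eq_iInf_iff_real_inner_le_zero hconv h.1).1 hinf z hz

theorem IsNearestPoint.mul_norm_le_inner (hconv : Convex ℝ C) (hr : 0 ≤ r)
    (hball : Metric.closedBall x r ⊆ C) (h : IsNearestPoint C y p) :
    r * ‖y - p‖ ≤ ⟪y - p, p - x⟫ := by
  rcases eq_or_ne y p with rfl | hyp
  · simp
  set v := y - p
  have hv : ‖v‖ ≠ 0 := norm_ne_zero_iff.2 (sub_ne_zero.2 hyp)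
  set c := r / ‖v‖
  have hcv : ⟪v, c • v⟫ = r * ‖v‖ := by
    rw [real_inner_smul_right, real_inner_self_eq_norm_sq, sq, ← mul_assoc, div_mul_cancel₀ r hv]
  have hz : x + c • v ∈ C := by
    refine hball ?_
    rw [Metric.mem_closedBall, dist_self_add_left, norm_smul, Real.norm_of_nonneg (by positivity),
      div_mul_cancel₀ r hv]
  have hvar := h.inner_sub_nonpos hconv hz
  rw [show x + c • v - p = c • v - (p - x) by abel, inner_sub_right, hcv] at hvar
  linarith

theorem IsNearestPoint.le_norm_sub_of_ne (hconv : Convex ℝ C) (hr : 0 ≤ r)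
    (hball : Metric.closedBall x r ⊆ C) (h : IsNearestPoint C y p) (hyp : y ≠ p) :
    r ≤ ‖p - x‖ := by
  have hv : 0 < ‖y - p‖ := norm_pos_iff.2 (sub_ne_zero.2 hyp)
  have := (h.mul_norm_le_inner hconv hr hball).trans (real_inner_le_norm _ _)
  rw [mul_comm] at this
  exact le_of_mul_le_mul_left this hv

theorem IsNearestPoint.two_mul_norm_sub_le (hconv : Convex ℝ C) (hr : 0 ≤ r)
    (hball : Metric.closedBall x r ⊆ C) (h : IsNearestPoint C y p) :
    2 * r * ‖p - y‖ ≤ max (‖y - x‖ ^ 2) (r ^ 2) - max (‖p - x‖ ^ 2) (r ^ 2) := by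
  rcases eq_or_ne y p with rfl | hyp
  · simp
  have hpx := h.le_norm_sub_of_ne hconv hr hball hyp
  have hinner := h.mul_norm_le_inner hconv hr hball
  have hexpand : ‖y - x‖ ^ 2 = ‖y - p‖ ^ 2 + 2 * ⟪y - p, p - x⟫ + ‖p - x‖ ^ 2 := by
    rw [← norm_add_sq_real, sub_add_sub_cancel]
  have hrpx : r ^ 2 ≤ ‖p - x‖ ^ 2 := pow_le_pow_left₀ hr hpx 2
  rw [max_eq_left hrpx, max_eq_left (by nlinarith [mul_nonneg hr (norm_nonneg (y - p))]),
    norm_sub_rev]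
  nlinarith

theorem abs_real_inner_eq_norm_mul_norm_of_finrank_le_one [FiniteDimensional ℝ E]
    (hE : Module.finrank ℝ E ≤ 1) (u w : E) : |⟪u, w⟫| = ‖u‖ * ‖w‖ := by
  obtain ⟨v, hv⟩ := finrank_le_one_iff.1 hE
  obtain ⟨a, rfl⟩ := hv u
  obtain ⟨b, rfl⟩ := hv w
  simp only [real_inner_smul_left, real_inner_smul_right, real_inner_self_eq_norm_sq,
    norm_smul, Real.norm_eq_abs, abs_mul, abs_pow, abs_norm]
  ring

theorem IsNearestPoint.norm_sub_le_of_finrank_le_one [FiniteDimensional ℝ E]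
    (hE : Module.finrank ℝ E ≤ 1) (hconv : Convex ℝ C) (hr : 0 ≤ r)
    (hball : Metric.closedBall x r ⊆ C) (h : IsNearestPoint C y p) :
    ‖p - y‖ ≤ max ‖y - x‖ r - max ‖p - x‖ r := by
  rcases eq_or_ne y p with rfl | hyp
  · simp
  have hpx := h.le_norm_sub_of_ne hconv hr hball hyp
  have hinner : ⟪y - p, p - x⟫ = ‖y - p‖ * ‖p - x‖ := by
    rw [← abs_real_inner_eq_norm_mul_norm_of_finrank_le_one hE, abs_of_nonneg]
    exact (mul_nonneg hr (norm_nonneg _)).trans (h.mul_norm_le_inner hconv hr hball)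
  have hsplit : ‖y - x‖ = ‖y - p‖ + ‖p - x‖ := by
    rw [← sq_eq_sq₀ (norm_nonneg _) (by positivity), ← sub_add_sub_cancel y p x,
      norm_add_sq_real, hinner]
    ring
  rw [max_eq_left hpx, max_eq_left (by linarith [norm_nonneg (y - p)]), norm_sub_rev]
  linarith

end NearestPoint

section CatchingUp

variable {E : Type*} [NormedAddCommGroup E] [InnerProductSpace ℝ E]
  {C : ℕ → Set E} {x : E} {r : ℝ} {n : ℕ} {Y : ℕ → E}

theorem sum_norm_sub_le_of_isNearestPoint (hr : 0 < r) (hconv : ∀ k < n, Convex ℝ (C k))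
    (hball : ∀ k < n, Metric.closedBall x r ⊆ C k)
    (hY : ∀ k < n, IsNearestPoint (C k) (Y k) (Y (k + 1))) :
    ∑ k ∈ Finset.range n, ‖Y (k + 1) - Y k‖ ≤ max 0 ((‖Y 0 - x‖ ^ 2 - r ^ 2) / (2 * r)) := by
  set g : ℕ → ℝ := fun k => max (‖Y k - x‖ ^ 2) (r ^ 2)
  have htele : ∑ k ∈ Finset.range n, 2 * r * ‖Y (k + 1) - Y k‖ ≤ g 0 - g n :=
    (Finset.sum_le_sum fun k hk => (hY k (Finset.mem_range.1 hk)).two_mul_norm_sub_le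
      (hconv k (Finset.mem_range.1 hk)) hr.le (hball k (Finset.mem_range.1 hk))).trans_eq
      (Finset.sum_range_sub' g n)
  rw [← Finset.mul_sum] at htele
  calc ∑ k ∈ Finset.range n, ‖Y (k + 1) - Y k‖ ≤ (g 0 - r ^ 2) / (2 * r) := by
        rw [le_div_iff₀ (by positivity)]
        linarith [le_max_right (‖Y n - x‖ ^ 2) (r ^ 2)]
    _ = max 0 ((‖Y 0 - x‖ ^ 2 - r ^ 2) / (2 * r)) := by
        rw [← max_sub_sub_right, sub_self, max_comm, ← max_div_div_right (by positivity),
          zero_div]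

theorem sum_norm_sub_le_of_isNearestPoint_of_finrank_le_one [FiniteDimensional ℝ E]
    (hE : Module.finrank ℝ E ≤ 1) (hr : 0 ≤ r) (hconv : ∀ k < n, Convex ℝ (C k))
    (hball : ∀ k < n, Metric.closedBall x r ⊆ C k)
    (hY : ∀ k < n, IsNearestPoint (C k) (Y k) (Y (k + 1))) :
    ∑ k ∈ Finset.range n, ‖Y (k + 1) - Y k‖ ≤ max 0 (‖Y 0 - x‖ - r) := by
  set g : ℕ → ℝ := fun k => max ‖Y k - x‖ r
  have htele : ∑ k ∈ Finset.range n, ‖Y (k + 1) - Y k‖ ≤ g 0 - g n :=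
    (Finset.sum_le_sum fun k hk => (hY k (Finset.mem_range.1 hk)).norm_sub_le_of_finrank_le_one
      hE (hconv k (Finset.mem_range.1 hk)) hr (hball k (Finset.mem_range.1 hk))).trans_eq
      (Finset.sum_range_sub' g n)
  calc ∑ k ∈ Finset.range n, ‖Y (k + 1) - Y k‖ ≤ g 0 - r := by
        linarith [le_max_right ‖Y n - x‖ r]
    _ = max 0 (‖Y 0 - x‖ - r) := by rw [← max_sub_sub_right, sub_self, max_comm]

end CatchingUp

theorem isNearestPoint_metricProj {e : ℕ} {C : Set (EuclideanSpace ℝ (Fin e))}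
    (hne : C.Nonempty) (hcomp : IsCompact C) (y : EuclideanSpace ℝ (Fin e)) :
    IsNearestPoint C y (metricProj C y) := by
  have h : ∃ p ∈ C, ∀ z ∈ C, dist y p ≤ dist y z :=
    hcomp.exists_isMinOn hne (continuous_const.dist continuous_id).continuousOn
  rw [metricProj, dif_pos h]
  exact h.choose_spec

theorem catchingUp_variation_le_general (e : ℕ) (T : ℝ) (hT : 0 < T)
    (C : ℝ → Set (EuclideanSpace ℝ (Fin e)))
    (hC : ∀ t ∈ Set.Icc (0 : ℝ) T,
      (C t).Nonempty ∧ IsCompact (C t) ∧ Convex ℝ (C t))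
    (x : EuclideanSpace ℝ (Fin e)) (r : ℝ) (hr : 0 < r)
    (hball : ∀ t ∈ Set.Icc (0 : ℝ) T, Metric.closedBall x r ⊆ C t)
    (a : EuclideanSpace ℝ (Fin e))
    (n : ℕ)
    (Y : ℕ → EuclideanSpace ℝ (Fin e))
    (hY0 : Y 0 = a)
    (hYrec : ∀ k < n, Y (k + 1) = metricProj (C ((k + 1) * T / n)) (Y k)) :
    ∑ k ∈ Finset.range n, ‖Y (k + 1) - Y k‖ ≤ valadierBound e r ‖a - x‖ := by
  have hgrid : ∀ k < n, ((k : ℝ) + 1) * T / n ∈ Set.Icc (0 : ℝ) T := fun k hk => by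
    have hkn : (k : ℝ) + 1 ≤ n := by exact_mod_cast hk
    refine ⟨by positivity, div_le_of_le_mul₀ (by positivity) hT.le ?_⟩
    nlinarith
  have hY : ∀ k < n, IsNearestPoint (C ((k + 1) * T / n)) (Y k) (Y (k + 1)) := fun k hk => by
    obtain ⟨hne, hcomp, -⟩ := hC _ (hgrid k hk)
    rw [hYrec k hk]
    exact isNearestPoint_metricProj hne hcomp _
  have hconv := fun k hk => (hC _ (hgrid k hk)).2.2
  have hball' := fun k hk => hball _ (hgrid k hk)
  rw [valadierBound, ← hY0]
  split_ifs with he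
  · exact sum_norm_sub_le_of_isNearestPoint hr hconv hball' hY
  · exact sum_norm_sub_le_of_isNearestPoint_of_finrank_le_one (by simpa using he) hr.le
      hconv hball' hY

theorem catchingUp_variation_le (e : ℕ) (T : ℝ) (hT : 0 < T)
    (C : ℝ → Set (EuclideanSpace ℝ (Fin e)))
    (hC : ∀ t ∈ Set.Icc (0 : ℝ) T,
      (C t).Nonempty ∧ IsCompact (C t) ∧ Convex ℝ (C t))
    (hcont : ∀ t ∈ Set.Icc (0 : ℝ) T, ∀ ε > (0 : ℝ), ∃ δ > (0 : ℝ),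
      ∀ s ∈ Set.Icc (0 : ℝ) T, |s - t| < δ →
        Metric.hausdorffDist (C s) (C t) < ε)
    (x : EuclideanSpace ℝ (Fin e)) (r : ℝ) (hr : 0 < r)
    (hball : ∀ t ∈ Set.Icc (0 : ℝ) T, Metric.closedBall x r ⊆ C t)
    (a : EuclideanSpace ℝ (Fin e)) (ha : a ∈ C 0)
    (n : ℕ) (hn : 0 < n)
    (Y : ℕ → EuclideanSpace ℝ (Fin e))
    (hY0 : Y 0 = a)
    (hYrec : ∀ k < n, Y (k + 1) = metricProj (C ((k + 1) * T / n)) (Y k)) :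
    ∑ k ∈ Finset.range n, ‖Y (k + 1) - Y k‖ ≤ valadierBound e r ‖a - x‖ :=
  catchingUp_variation_le_general e T hT C hC x r hr hball a n Y hY0 hYrec
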